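/- In a morphic triple (V, W, β), dim W ≥ dim V − 1. -/

import Mathlib

open Module

variable {p : ℕ}

/-- The "derived" subspace `[U₁, U₂]`: the span of the values `β x y` for
`x ∈ U₁`, `y ∈ U₂`. -/
def pairSpan {V W : Type*} [AddCommGroup V] [Module (ZMod p) V]
    [AddCommGroup W] [Module (ZMod p) W]
    (β : V →ₗ[ZMod p] V →ₗ[ZMod p] W) (U₁ U₂ : Submodule (ZMod p) V) :
    Submodule (ZMod p) W :=
  Submodule.span (ZMod p) {w | ∃ x ∈ U₁, ∃ y ∈ U₂, β x y = w}

/-- `U' = [U, U]`. -/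
def der {V W : Type*} [AddCommGroup V] [Module (ZMod p) V]
    [AddCommGroup W] [Module (ZMod p) W]
    (β : V →ₗ[ZMod p] V →ₗ[ZMod p] W) (U : Submodule (ZMod p) V) :
    Submodule (ZMod p) W :=
  pairSpan β U U

/-- `(V, W, β)` is a morphic triple if `β` is alternating, `V' = W`, `U'` is a maximal
subspace of `W` for every maximal subspace `U` of `V`, and the intersection of all
such `U'` is zero. -/
def IsMorphicTriple {V W : Type*} [AddCommGroup V] [Module (ZMod p) V]
    [AddCommGroup W] [Module (ZMod p) W]
    (β : V →ₗ[ZMod p] V →ₗ[ZMod p] W) : Prop :=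
  (∀ v : V, β v v = 0) ∧
  der β ⊤ = ⊤ ∧
  (∀ U : Submodule (ZMod p) V, IsCoatom U → IsCoatom (der β U)) ∧
  (⨅ (U : Submodule (ZMod p) V) (_ : IsCoatom U), der β U) = ⊥

/-!
Count hyperplanes. Over a field with `q` elements an `n`-dimensional space has
`1 + q + ⋯ + q ^ (n - 1)` hyperplanes, and `U ↦ U'` maps the hyperplanes of `V` to those of `W`.
If distinct hyperplanes `U₁`, `U₂` have the same image `M`, then `[U₁ ∩ U₂, V]` and
`[V, U₁ ∩ U₂]` lie in `M` because `V = U₁ + U₂`; hence every hyperplane `U` with `U' ≤ M`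
contains `U₁ ∩ U₂`, as otherwise `V = U + U₁ ∩ U₂` would give `V' ≤ M ≠ W`. So every fibre
consists of hyperplanes through a subspace of codimension two and has at most `q + 1` elements,
and `1 + ⋯ + q ^ (n - 1) ≤ (q + 1) (1 + ⋯ + q ^ (m - 1))` forces `n ≤ m + 1`.
-/

open Submodule Finset

instance Submodule.finite_of_finite {R M : Type*} [Semiring R] [AddCommMonoid M] [Module R M]
    [Finite M] : Finite (Submodule R M) :=
  Finite.of_injective _ SetLike.coe_injective

theorem Nat.card_le_mul_card_of_card_fiber_le {α β : Type*} [Finite α] [Finite β] (f : α → β)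
    {n : ℕ} (h : ∀ b, Nat.card {a // f a = b} ≤ n) : Nat.card α ≤ n * Nat.card β := by
  have := Fintype.ofFinite β
  rw [← Nat.card_congr (Equiv.sigmaFiberEquiv f), Nat.card_sigma, Nat.card_eq_fintype_card,
    mul_comm]
  simpa using sum_le_card_nsmul univ _ n fun b _ => h b

theorem Nat.le_succ_of_geom_sum_le {q m n : ℕ} (hq : 2 ≤ q)
    (h : ∑ i ∈ range n, q ^ i ≤ (q + 1) * ∑ i ∈ range m, q ^ i) : n ≤ m + 1 := by
  by_contra! hmn
  have hmono : ∑ i ∈ range (m + 2), q ^ i ≤ ∑ i ∈ range n, q ^ i :=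
    sum_le_sum_of_subset (range_subset_range.2 hmn)
  have hsplit : ∑ i ∈ range (m + 2), q ^ i = q ^ 2 * ∑ i ∈ range m, q ^ i + (q + 1) := by
    rw [sum_range_succ', sum_range_succ', mul_sum]
    simp only [pow_add]
    ring_nf
  nlinarith [Nat.mul_le_mul_right (∑ i ∈ range m, q ^ i) (show q + 1 ≤ q ^ 2 by nlinarith)]

section Bilinear

variable {R M P : Type*} [CommSemiring R] [AddCommMonoid M] [Module R M] [AddCommMonoid P]
  [Module R P] (f : M →ₗ[R] M →ₗ[R] P) {A B C : Submodule R M} {N : Submodule R P}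

theorem Submodule.map₂_top_le_of_sup_eq_top (hAB : A ⊔ B = ⊤) (hC : C ⊔ A ⊓ B = ⊤)
    (hfA : map₂ f A A ≤ N) (hfB : map₂ f B B ≤ N) (hfC : map₂ f C C ≤ N) :
    map₂ f ⊤ ⊤ ≤ N := by
  have hleft : map₂ f (A ⊓ B) ⊤ ≤ N := by
    rw [← hAB, map₂_sup_right]
    exact sup_le ((map₂_le_map₂_left inf_le_left).trans hfA)
      ((map₂_le_map₂_left inf_le_right).trans hfB)
  have hright : map₂ f ⊤ (A ⊓ B) ≤ N := by
    rw [← hAB, map₂_sup_left]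
    exact sup_le ((map₂_le_map₂_right inf_le_left).trans hfA)
      ((map₂_le_map₂_right inf_le_right).trans hfB)
  rw [← hC, map₂_sup_left, map₂_sup_right]
  exact sup_le (sup_le hfC ((map₂_le_map₂_left le_top).trans hright))
    ((map₂_le_map₂_right le_top).trans hleft)

end Bilinear

def Submodule.coatomsAboveEquiv {R M : Type*} [Ring R] [AddCommGroup M] [Module R M]
    (S : Submodule R M) :
    {U : Submodule R M // IsCoatom U ∧ S ≤ U} ≃ {U : Submodule R (M ⧸ S) // IsCoatom U} where
  toFun U := ⟨U.1.map S.mkQ,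
    isCoatom_map_of_ker_le S.mkQ_surjective (by rw [ker_mkQ]; exact U.2.2) U.2.1⟩
  invFun U := ⟨U.1.comap S.mkQ, (isCoatom_comap_iff S.mkQ_surjective).2 U.2, by
    simpa [ker_mkQ] using LinearMap.ker_le_comap (f := S.mkQ) (p := U.1)⟩
  left_inv U := Subtype.ext <| by simp [comap_map_mkQ, sup_eq_right.2 U.2.2]
  right_inv U := Subtype.ext <| map_comap_eq_of_surjective S.mkQ_surjective _

theorem Submodule.finrank_quotient_inf_le {K V : Type*} [DivisionRing K] [AddCommGroup V]
    [Module K V] [FiniteDimensional K V] (A B : Submodule K V) :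
    finrank K (V ⧸ A ⊓ B) ≤ finrank K (V ⧸ A) + finrank K (V ⧸ B) := by
  have hker : LinearMap.ker (A.mkQ.prod B.mkQ) = A ⊓ B := by
    rw [LinearMap.ker_prod, ker_mkQ, ker_mkQ]
  calc finrank K (V ⧸ A ⊓ B) = finrank K (LinearMap.range (A.mkQ.prod B.mkQ)) := by
        rw [← hker]; exact (LinearMap.quotKerEquivRange _).finrank_eq
    _ ≤ finrank K ((V ⧸ A) × (V ⧸ B)) := Submodule.finrank_le _
    _ = finrank K (V ⧸ A) + finrank K (V ⧸ B) := finrank_prod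

theorem IsCoatom.finrank_quotient {K V : Type*} [DivisionRing K] [AddCommGroup V]
    [Module K V] {U : Submodule K V} (hU : IsCoatom U) : finrank K (V ⧸ U) = 1 :=
  isSimpleModule_iff_finrank_eq_one.mp (isSimpleModule_iff_isCoatom.mpr hU)

theorem Subspace.isCoatom_iff_isAtom_dualAnnihilator {K V : Type*} [Field K] [AddCommGroup V]
    [Module K V] [FiniteDimensional K V] {U : Subspace K V} :
    IsCoatom U ↔ IsAtom U.dualAnnihilator :=
  isAtom_dual_iff_isCoatom.symm.trans
    ((orderIsoFiniteDimensional (K := K) (V := V)).dual.isAtom_iff (OrderDual.toDual U)).symm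

section FiniteField

variable {K V : Type*} [Field K] [Finite K] [AddCommGroup V] [Module K V] [FiniteDimensional K V]

variable (K V) in
theorem card_coatoms :
    Nat.card {U : Submodule K V // IsCoatom U} = ∑ i ∈ range (finrank K V), Nat.card K ^ i := by
  rw [← Projectivization.card_of_finrank K (Dual K V) Subspace.dual_finrank_eq]
  refine Nat.card_congr <|
    (((Subspace.orderIsoFiniteDimensional (K := K) (V := V)).toEquiv.trans
      OrderDual.ofDual).subtypeEquiv fun _ => Subspace.isCoatom_iff_isAtom_dualAnnihilator).trans <|
    (Equiv.subtypeEquivRight fun _ => isAtom_iff_finrank_eq_one).trans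
      (Projectivization.equivSubmodule K (Dual K V)).symm

theorem card_coatoms_le_of_finrank_le_two (h : finrank K V ≤ 2) :
    Nat.card {U : Submodule K V // IsCoatom U} ≤ Nat.card K + 1 := by
  rw [card_coatoms]
  calc ∑ i ∈ range (finrank K V), Nat.card K ^ i ≤ ∑ i ∈ range 2, Nat.card K ^ i :=
        sum_le_sum_of_subset (range_subset_range.2 h)
    _ = Nat.card K + 1 := by simp [sum_range_succ, add_comm]

theorem card_coatoms_map₂_le {P : Type*} [AddCommGroup P] [Module K P]
    (f : V →ₗ[K] V →ₗ[K] P) {N : Submodule K P} (hN : ¬ map₂ f ⊤ ⊤ ≤ N) :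
    Nat.card {U : Submodule K V // IsCoatom U ∧ map₂ f U U ≤ N} ≤ Nat.card K + 1 := by
  have : Finite V := Module.finite_of_finite K
  rcases subsingleton_or_nontrivial {U : Submodule K V // IsCoatom U ∧ map₂ f U U ≤ N}
    with h | h
  · exact (Finite.card_le_one_iff_subsingleton.2 h).trans (Nat.le_add_left 1 _)
  obtain ⟨⟨U₁, h₁, hf₁⟩, ⟨U₂, h₂, hf₂⟩, hne⟩ :=
    exists_pair_ne {U // IsCoatom U ∧ map₂ f U U ≤ N}
  have hsup : U₁ ⊔ U₂ = ⊤ := h₁.sup_eq_top_of_ne h₂ fun h => hne (Subtype.ext h)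
  have hle (U : Submodule K V) (hU : IsCoatom U ∧ map₂ f U U ≤ N) : U₁ ⊓ U₂ ≤ U := by
    by_contra hnle
    exact hN <| map₂_top_le_of_sup_eq_top f hsup
      (codisjoint_iff.1 (hU.1.not_le_iff_codisjoint.1 hnle)) hf₁ hf₂ hU.2
  calc Nat.card {U // IsCoatom U ∧ map₂ f U U ≤ N}
      ≤ Nat.card {U : Submodule K V // IsCoatom U ∧ U₁ ⊓ U₂ ≤ U} :=
        Nat.card_le_card_of_injective _
          (Subtype.impEmbedding _ _ fun U hU => ⟨hU.1, hle U hU⟩).injective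
    _ = Nat.card {U : Submodule K (V ⧸ U₁ ⊓ U₂) // IsCoatom U} :=
        Nat.card_congr (coatomsAboveEquiv _)
    _ ≤ Nat.card K + 1 := card_coatoms_le_of_finrank_le_two <|
        (finrank_quotient_inf_le U₁ U₂).trans_eq (by rw [h₁.finrank_quotient, h₂.finrank_quotient])

theorem card_coatoms_le_of_isCoatom_map₂ {P : Type*} [AddCommGroup P] [Module K P]
    [FiniteDimensional K P] (f : V →ₗ[K] V →ₗ[K] P) (htop : map₂ f ⊤ ⊤ = ⊤)
    (hcoat : ∀ U, IsCoatom U → IsCoatom (map₂ f U U)) :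
    Nat.card {U : Submodule K V // IsCoatom U} ≤
      (Nat.card K + 1) * Nat.card {N : Submodule K P // IsCoatom N} := by
  have : Finite V := Module.finite_of_finite K
  have : Finite P := Module.finite_of_finite K
  refine Nat.card_le_mul_card_of_card_fiber_le (fun U => ⟨map₂ f U U, hcoat U.1 U.2⟩) fun N => ?_
  have hN : ¬ map₂ f ⊤ ⊤ ≤ N.1 := fun h => N.2.ne_top (top_le_iff.1 (htop ▸ h))
  refine le_trans (Nat.card_le_card_of_injective
    (fun U => (⟨U.1.1, U.1.2, (congrArg Subtype.val U.2).le⟩ :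
      {U : Submodule K V // IsCoatom U ∧ map₂ f U U ≤ N.1}))
    fun _ _ h => Subtype.ext (Subtype.ext (by simpa using h))) (card_coatoms_map₂_le f hN)

end FiniteField

theorem der_eq_map₂ {V W : Type*} [AddCommGroup V] [Module (ZMod p) V]
    [AddCommGroup W] [Module (ZMod p) W] (β : V →ₗ[ZMod p] V →ₗ[ZMod p] W)
    (U : Submodule (ZMod p) V) : der β U = map₂ β U U :=
  (map₂_eq_span_image2 β U U).symm

/-- In a morphic triple `(V, W, β)`, we have `dim W ≥ dim V - 1`. -/
theorem finrank_W_ge [Fact p.Prime]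
    {V W : Type*} [AddCommGroup V] [Module (ZMod p) V] [FiniteDimensional (ZMod p) V]
    [AddCommGroup W] [Module (ZMod p) W] [FiniteDimensional (ZMod p) W]
    (β : V →ₗ[ZMod p] V →ₗ[ZMod p] W) (hβ : IsMorphicTriple β) :
    Module.finrank (ZMod p) W ≥ Module.finrank (ZMod p) V - 1 := by
  obtain ⟨-, htop, hcoat, -⟩ := hβ
  simp only [der_eq_map₂] at htop hcoat
  have hcount := card_coatoms_le_of_isCoatom_map₂ β htop hcoat
  rw [card_coatoms, card_coatoms] at hcount
  have := Nat.le_succ_of_geom_sum_le Finite.one_lt_card hcount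
  omega
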